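/- arXiv:1303.5545 — 2 statements merged into one kernel-verified Lean document; each statement's English description precedes it below -/
import Mathlib

section
/- Let S and T be finite quantum stop times and suppose T is deterministic, i.e. T({t}) = I for some t ∈ (0,∞). Then S ⋆ T = S + t, where S + t is the finite quantum stop time with (S + t)([0,u]) = 0 if u ∈ [0,t) and (S + t)([0,u]) = S([0, u − t]) if u ∈ [t,∞]. -/
/- ------------------------------------------------------------------
Common framework: an abstract axiomatisation of Boson Fock space
`𝓕 = Γ(L²([0,∞); k))` over `H = L²([0,∞); k)`, quantum stop times,
stop-time integrals (as limits of Riemann sums over the net of finite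
partitions of `[0, t] ⊆ [0, ∞]` ordered by refinement), the CCR flow,
and operator cocycles, following Belton–Sinha,
"Stopping the CCR flow and its isometric cocycles".
------------------------------------------------------------------ -/

open Filter MeasureTheory Topology
open scoped ENNReal

noncomputable section

local notation "⟪" x ", " y "⟫" => @inner ℂ _ _ x y

/-- A finite partition `{0 = π₀ < π₁ < ⋯ < π_{n+1} = t}` of `[0, t] ⊆ [0, ∞]`,
encoded as a finite set of points of `[0, ∞]` containing `0` and `t` and
contained in `[0, t]`. -/
structure StopPartition (t : ℝ≥0∞) where
  pts : Finset ℝ≥0∞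
  zero_mem : 0 ∈ pts
  top_mem : t ∈ pts
  mem_le : ∀ s ∈ pts, s ≤ t

namespace StopPartition

variable {t : ℝ≥0∞}

/-- Partitions are (pre)ordered by refinement: `π ≤ π'` iff `π'` refines `π`. -/
instance : Preorder (StopPartition t) where
  le π π' := π.pts ⊆ π'.pts
  le_refl _ := Finset.Subset.refl _
  le_trans _ _ _ h h' := Finset.Subset.trans h h'

/-- The predecessor of `s` in the partition `π`: the largest partition point
strictly less than `s` (and `0` if there is none). -/
def pred (π : StopPartition t) (s : ℝ≥0∞) : ℝ≥0∞ :=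
  (π.pts.filter fun u => u < s).sup id

end StopPartition

variable {H 𝓕 : Type*}
  [NormedAddCommGroup H] [InnerProductSpace ℂ H] [CompleteSpace H]
  [NormedAddCommGroup 𝓕] [InnerProductSpace ℂ 𝓕] [CompleteSpace 𝓕]

/-- An abstract presentation of Boson Fock space `𝓕 ≅ Γ(H)` over
`H = L²([0,∞); k)`, together with the structure maps needed here:
exponential vectors, truncation `f ↦ f·1_{[0,t)}`, the right shifts `θ_t`
and their adjoints, second quantisations `Γ_t` (with `Γ_∞` the projection
onto `ℂε(0)`, i.e. the second quantisation of `θ_∞ = 0`), and for each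
`f ∈ H`, `s ∈ [0,∞]` the "past insertion" operator
`past f s = |ε(f1_{[0,s)})⟩⟨ε(0)| ⊗ I_{[s}` on `𝓕 ≅ 𝓕_{s)} ⊗ 𝓕_{[s}`, which
maps a future-adapted vector `ε(0|_{[0,s)}) ⊗ x` to `ε(f|_{[0,s)}) ⊗ x`. -/
structure FockSpec (H 𝓕 : Type*) [NormedAddCommGroup H] [InnerProductSpace ℂ H]
    [CompleteSpace H] [NormedAddCommGroup 𝓕] [InnerProductSpace ℂ 𝓕] [CompleteSpace 𝓕] where
  /-- the exponential vectors -/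
  eV : H → 𝓕
  inner_eV : ∀ f g : H, ⟪eV f, eV g⟫ = Complex.exp ⟪f, g⟫
  dense_eV : Dense (Submodule.span ℂ (Set.range eV) : Set 𝓕)
  /-- `cut t` is multiplication by the indicator of `[0, t)`, `f ↦ f|_{[0,t)}` -/
  cut : ℝ≥0∞ → H →L[ℂ] H
  cut_zero : cut 0 = 0
  cut_top : cut ⊤ = ContinuousLinearMap.id ℂ H
  cut_sa : ∀ (t : ℝ≥0∞) (f g : H), ⟪cut t f, g⟫ = ⟪f, cut t g⟫
  cut_min : ∀ (s u : ℝ≥0∞) (f : H), cut s (cut u f) = cut (min s u) f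
  /-- the isometric right shift `θ_t`, with `θ_∞ = 0` -/
  shift : ℝ≥0∞ → H →L[ℂ] H
  shift_top : shift ⊤ = 0
  shift_inner : ∀ t : ℝ≥0∞, t ≠ ⊤ → ∀ f g : H, ⟪shift t f, shift t g⟫ = ⟪f, g⟫
  shift_add : ∀ (s u : ℝ≥0∞) (f : H), shift s (shift u f) = shift (s + u) f
  cut_shift : ∀ (t : ℝ≥0∞) (f : H), cut t (shift t f) = 0
  /-- `shiftL t = θ_t^*`, i.e. `f ↦ f(· + t)` -/
  shiftL : ℝ≥0∞ → H →L[ℂ] H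
  shiftL_adj : ∀ (t : ℝ≥0∞) (f g : H), ⟪shift t f, g⟫ = ⟪f, shiftL t g⟫
  /-- the second quantisation `Γ_t : ε(f) ↦ ε(θ_t f)`;  `Γ_∞` is the orthogonal
  projection onto `ℂ ε(0)` -/
  Gam : ℝ≥0∞ → 𝓕 →L[ℂ] 𝓕
  Gam_eV : ∀ (t : ℝ≥0∞) (f : H), Gam t (eV f) = eV (shift t f)
  /-- `GamL t = Γ_t^*` -/
  GamL : ℝ≥0∞ → 𝓕 →L[ℂ] 𝓕
  GamL_eV : ∀ t : ℝ≥0∞, t ≠ ⊤ → ∀ f : H, GamL t (eV f) = eV (shiftL t f)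
  GamL_adj : ∀ (t : ℝ≥0∞) (x y : 𝓕), ⟪Gam t x, y⟫ = ⟪x, GamL t y⟫
  /-- past insertion: on `𝓕 ≅ 𝓕_{s)} ⊗ 𝓕_{[s}`,
  `past f s = |ε(f|_{[0,s)})⟩⟨ε(0|_{[0,s)})| ⊗ I_{[s}`; it maps `ε(0|_{[0,s)}) ⊗ x`
  to `ε(f|_{[0,s)}) ⊗ x` -/
  past : H → ℝ≥0∞ → 𝓕 →L[ℂ] 𝓕
  past_eV : ∀ (f : H) (s : ℝ≥0∞) (g : H), past f s (eV g) = eV (cut s f + g - cut s g)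
  /-- `projE t = E_t`, the second quantisation of `cut t`: the orthogonal projection
  onto `𝓕_{t)} ⊗ ε(0|_{[t,∞)})` -/
  projE : ℝ≥0∞ → 𝓕 →L[ℂ] 𝓕
  projE_eV : ∀ (t : ℝ≥0∞) (f : H), projE t (eV f) = eV (cut t f)

namespace FockSpec

variable (E : FockSpec H 𝓕)

/-- `X ∈ B(𝓕_{t)}) ⊗ I_{[t}`, expressed through the factorisation of matrix
elements between exponential vectors. -/
def AdaptedAt (X : 𝓕 →L[ℂ] 𝓕) (t : ℝ≥0∞) : Prop :=
  ∀ f g : H, ⟪E.eV f, X (E.eV g)⟫ =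
    ⟪E.eV (E.cut t f), X (E.eV (E.cut t g))⟫ * Complex.exp ⟪f - E.cut t f, g - E.cut t g⟫

/-- `F : [0, t] → 𝓕` is future adapted: `F(s) = ε(0|_{[0,s)}) ⊗ F_s ∈
ε(0|_{[0,s)}) ⊗ 𝓕_{[s}` for all `s ∈ (0, t]` (the value at `s = ∞`, when `t = ∞`,
being fixed by the same requirement). -/
def FutureAdapted (t : ℝ≥0∞) (F : ℝ≥0∞ → 𝓕) : Prop :=
  ∀ s : ℝ≥0∞, 0 < s → s ≤ t → E.past 0 s (F s) = F s

end FockSpec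

/-- `F` is bounded on `[0, t]`. -/
def BddOn {𝓕 : Type*} [NormedAddCommGroup 𝓕] (t : ℝ≥0∞) (F : ℝ≥0∞ → 𝓕) : Prop :=
  ∃ C : ℝ, ∀ s ≤ t, ‖F s‖ ≤ C

/-- A quantum stop time: a spectral measure on the Borel sets of `[0, ∞]`,
with values orthogonal projections on `𝓕`, which is identity adapted; we impose
throughout (as in the paper) that `S({0}) = 0`. -/
structure QST (E : FockSpec H 𝓕) where
  meas : Set ℝ≥0∞ → 𝓕 →L[ℂ] 𝓕
  sa : ∀ A : Set ℝ≥0∞, IsSelfAdjoint (meas A)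
  idem : ∀ A : Set ℝ≥0∞, meas A ∘L meas A = meas A
  /-- condition (ii): `A ↦ ⟨x, S(A) y⟩` is a complex measure -/
  cm : 𝓕 → 𝓕 → MeasureTheory.ComplexMeasure ℝ≥0∞
  cm_apply : ∀ (x y : 𝓕) (A : Set ℝ≥0∞), MeasurableSet A → cm x y A = ⟪x, meas A y⟫
  total : meas Set.univ = 1
  adapted : ∀ t : ℝ≥0∞, t ≠ ⊤ → E.AdaptedAt (meas {s | s ≤ t}) t
  zero : meas {0} = 0

namespace QST

variable {E : FockSpec H 𝓕}

/-- A quantum stop time is finite when `S({∞}) = 0`. -/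
def Finite (S : QST E) : Prop := S.meas {⊤} = 0

/-- The Riemann sum `Σ_{j=1}^{n+1} S((π_{j-1}, π_j]) v(π_j)` associated with a
partition `π` of `[0, t]` and an integrand `v`. -/
def sum (S : QST E) {t : ℝ≥0∞} (v : ℝ≥0∞ → 𝓕) (π : StopPartition t) : 𝓕 :=
  ∑ s ∈ π.pts.erase 0, S.meas (Set.Ioc (π.pred s) s) (v s)

end QST

variable {E : FockSpec H 𝓕}

/-- The integral of a complex function against a complex measure, via the Jordan
decompositions of its real and imaginary parts. -/
def cintegral (μ : MeasureTheory.ComplexMeasure ℝ≥0∞) (φ : ℝ≥0∞ → ℂ) : ℂ :=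
  ((∫ s, φ s ∂(MeasureTheory.ComplexMeasure.re μ).toJordanDecomposition.posPart) -
      ∫ s, φ s ∂(MeasureTheory.ComplexMeasure.re μ).toJordanDecomposition.negPart) +
    Complex.I * ((∫ s, φ s ∂(MeasureTheory.ComplexMeasure.im μ).toJordanDecomposition.posPart) -
      ∫ s, φ s ∂(MeasureTheory.ComplexMeasure.im μ).toJordanDecomposition.negPart)

/-- `∫_{[0,t]} φ(s) S^{f,g}(ds)`, where `S^{f,g}` is the finite Borel measure on
`[0, ∞]` with `S^{f,g}(A) = ∫_A exp(-∫_s^∞ ⟨f(r), g(r)⟩ dr) ⟨ε(f), S(ds) ε(g)⟩`;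
here `∫_s^∞ ⟨f(r), g(r)⟩ dr = ⟪f - f|_{[0,s)}, g - g|_{[0,s)}⟫`. -/
def QST.sfgIntegral (S : QST E) (f g : H) (t : ℝ≥0∞) (φ : ℝ≥0∞ → ℂ) : ℂ :=
  cintegral (S.cm (E.eV f) (E.eV g))
    (Set.indicator {s | s ≤ t}
      fun s => φ s * Complex.exp (-⟪f - E.cut s f, g - E.cut s g⟫))

/-- `ESt` is the family `(E_{S,t})_{t ∈ (0,∞]}` of time projections of `S`:
each `E_{S,t}` is an orthogonal projection and
`E_{S,t} ε(f) = ∫_{[0,t]} S(ds) ε(f|_{[0,s)}) ⊗ ε(0|_{[s,∞)})`. -/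
def IsTimeProj (S : QST E) (ESt : ℝ≥0∞ → 𝓕 →L[ℂ] 𝓕) : Prop :=
  ∀ t : ℝ≥0∞, 0 < t →
    IsSelfAdjoint (ESt t) ∧ ESt t ∘L ESt t = ESt t ∧
      ∀ f : H,
        Tendsto (fun π : StopPartition t => S.sum (fun s => E.past f s (E.eV 0)) π) atTop
          (𝓝 (ESt t (E.eV f)))

/-- `ΓS` is the stopped right shift of `S`:
`Γ_S x = ∫_{[0,∞]} S(ds) ε(0|_{[0,s)}) ⊗ Γ_s x`. -/
def IsStoppedShift (S : QST E) (ΓS : 𝓕 →L[ℂ] 𝓕) : Prop :=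
  ∀ x : 𝓕, Tendsto (fun π : StopPartition ⊤ => S.sum (fun s => E.Gam s x) π) atTop (𝓝 (ΓS x))

/-- `j` encodes the isometric isomorphism `j_S : 𝓕_{S)} ⊗ 𝓕_{[S} → 𝓕` of the
abstract strong Markov property, as a bilinear map on `𝓕 × 𝓕` (precomposed with
`E_S = E_{S,∞}` and `Γ_S` in the two arguments): it satisfies
`j_S(E_{S,t} ε(f) ⊗ Γ_S x) = ∫_{[0,t]} S(ds) ε(f|_{[0,s)}) ⊗ Γ_s x`, is isometric
for the tensor inner product, and has dense (hence, being isometric, full) range. -/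
def IsJS (S : QST E) (ESt : ℝ≥0∞ → 𝓕 →L[ℂ] 𝓕) (ΓS : 𝓕 →L[ℂ] 𝓕)
    (j : 𝓕 →ₗ[ℂ] 𝓕 →ₗ[ℂ] 𝓕) : Prop :=
  (∀ t : ℝ≥0∞, 0 < t → ∀ (f : H) (x : 𝓕),
      Tendsto (fun π : StopPartition t => S.sum (fun s => E.past f s (E.Gam s x)) π) atTop
        (𝓝 (j (ESt t (E.eV f)) (ΓS x)))) ∧
    (∀ a b x y : 𝓕,
      ⟪j (ESt ⊤ a) (ΓS x), j (ESt ⊤ b) (ΓS y)⟫ = ⟪ESt ⊤ a, ESt ⊤ b⟫ * ⟪ΓS x, ΓS y⟫) ∧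
    Dense (Submodule.span ℂ {z : 𝓕 | ∃ a x : 𝓕, z = j (ESt ⊤ a) (ΓS x)} : Set 𝓕)

/-- A spectral measure on the Borel sets of `[0, ∞]²`. -/
def IsSpectralProd (P : Set (ℝ≥0∞ × ℝ≥0∞) → 𝓕 →L[ℂ] 𝓕) : Prop :=
  (∀ A, IsSelfAdjoint (P A)) ∧ (∀ A, P A ∘L P A = P A) ∧ P Set.univ = 1 ∧
    ∀ A : ℕ → Set (ℝ≥0∞ × ℝ≥0∞), (∀ n, MeasurableSet (A n)) →
      Pairwise (Function.onFun Disjoint A) → ∀ x y : 𝓕,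
        HasSum (fun n => ⟪x, P (A n) y⟫) ⟪x, P (⋃ n, A n) y⟫

/-- `P` is the product spectral measure `S ⊗ T` on `[0, ∞]²`, determined on
rectangles by `(S ⊗ T)(A × B) = j_S (S(A) ⊗ Γ_S T(B) Γ_S^*) j_S^*`. -/
def IsProdOf (S T : QST E) (ESt : ℝ≥0∞ → 𝓕 →L[ℂ] 𝓕) (ΓS : 𝓕 →L[ℂ] 𝓕)
    (jS : 𝓕 →ₗ[ℂ] 𝓕 →ₗ[ℂ] 𝓕) (P : Set (ℝ≥0∞ × ℝ≥0∞) → 𝓕 →L[ℂ] 𝓕) : Prop :=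
  IsSpectralProd P ∧
    ∀ A B : Set ℝ≥0∞, MeasurableSet A → MeasurableSet B → ∀ a y : 𝓕,
      P (A ×ˢ B) (jS (ESt ⊤ a) (ΓS y)) = jS (S.meas A (ESt ⊤ a)) (ΓS (T.meas B y))

/-- `ST` is the convolution `S ⋆ T`:
`(S ⋆ T)(C) = (S ⊗ T)({(s, u) : s + u ∈ C})`. -/
def IsConvOf (S T : QST E) (ESt : ℝ≥0∞ → 𝓕 →L[ℂ] 𝓕) (ΓS : 𝓕 →L[ℂ] 𝓕)
    (jS : 𝓕 →ₗ[ℂ] 𝓕 →ₗ[ℂ] 𝓕) (ST : QST E) : Prop :=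
  ∃ P : Set (ℝ≥0∞ × ℝ≥0∞) → 𝓕 →L[ℂ] 𝓕, IsProdOf S T ESt ΓS jS P ∧
    ∀ C : Set ℝ≥0∞, MeasurableSet C → ST.meas C = P {p | p.1 + p.2 ∈ C}

/-- A Borel measurable, bounded, future-adapted integrand on `[0, t]`. -/
def MeasIntegrand [MeasurableSpace 𝓕] (E : FockSpec H 𝓕) (t : ℝ≥0∞)
    (F : ℝ≥0∞ → 𝓕) : Prop :=
  Measurable F ∧ BddOn t F ∧ E.FutureAdapted t F

/-- `Int` is a stop-time integral for `S`: `Int t f F` plays the role of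
`∫_{[0,t]} S(ds) ε(f|_{[0,s)}) ⊗ F_s` for Borel measurable, bounded,
future-adapted `F`, satisfying the inner-product and projection identities and
extending the Riemann-sum limit for continuous integrands. -/
def IsStopIntegral [MeasurableSpace 𝓕] (E : FockSpec H 𝓕) (S : QST E)
    (Int : ℝ≥0∞ → H → (ℝ≥0∞ → 𝓕) → 𝓕) : Prop :=
  (∀ (t : ℝ≥0∞) (f g : H) (F G : ℝ≥0∞ → 𝓕), MeasIntegrand E t F → MeasIntegrand E t G →
      ⟪Int t f F, Int t g G⟫ = S.sfgIntegral f g t fun s => ⟪F s, G s⟫) ∧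
    (∀ (t : ℝ≥0∞) (f : H) (F : ℝ≥0∞ → 𝓕), MeasIntegrand E t F → ∀ r : ℝ≥0∞, 0 < r →
      S.meas {s | s ≤ r} (Int t f F) = Int (min r t) f F) ∧
    (∀ (t : ℝ≥0∞) (f : H) (F : ℝ≥0∞ → 𝓕), MeasIntegrand E t F →
      ContinuousOn F {s | s ≤ t} →
        Tendsto (fun π : StopPartition t => S.sum (fun s => E.past f s (F s)) π) atTop
          (𝓝 (Int t f F)))

/-- `σ` is the CCR flow: `σ_t(X) = I_{t)} ⊗ Γ_t X Γ_t^*` for `t ∈ [0, ∞)`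
(expressed through matrix elements between exponential vectors), and `σ_∞ ≡ I`. -/
def IsCCRFlow (E : FockSpec H 𝓕) (σ : ℝ≥0∞ → (𝓕 →L[ℂ] 𝓕) → 𝓕 →L[ℂ] 𝓕) : Prop :=
  (∀ s : ℝ≥0∞, s ≠ ⊤ → ∀ (X : 𝓕 →L[ℂ] 𝓕) (f g : H),
      ⟪E.eV f, σ s X (E.eV g)⟫ =
        Complex.exp ⟪E.cut s f, E.cut s g⟫ *
          ⟪E.eV (E.shiftL s f), X (E.eV (E.shiftL s g))⟫) ∧
    ∀ X : 𝓕 →L[ℂ] 𝓕, σ ⊤ X = 1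

/-- The Riemann sum `σ_{S,π}(X) = Σ_{j=1}^{n+1} σ_{π_j}(X) S((π_{j-1}, π_j])`. -/
def QST.flowSum (S : QST E) (σ : ℝ≥0∞ → (𝓕 →L[ℂ] 𝓕) → 𝓕 →L[ℂ] 𝓕)
    (X : 𝓕 →L[ℂ] 𝓕) (π : StopPartition (⊤ : ℝ≥0∞)) : 𝓕 →L[ℂ] 𝓕 :=
  ∑ s ∈ π.pts.erase 0, σ s X ∘L S.meas (Set.Ioc (π.pred s) s)

/-- `σS` is the stopped CCR flow `σ_S`: for every `X`, `σ_S(X)` is the limit of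
`σ_{S,π}(X)` in the strong operator topology as `π` is refined. -/
def IsStoppedFlow (S : QST E) (σ : ℝ≥0∞ → (𝓕 →L[ℂ] 𝓕) → 𝓕 →L[ℂ] 𝓕)
    (σS : (𝓕 →L[ℂ] 𝓕) → 𝓕 →L[ℂ] 𝓕) : Prop :=
  ∀ (X : 𝓕 →L[ℂ] 𝓕) (x : 𝓕),
    Tendsto (fun π : StopPartition ⊤ => S.flowSum σ X π x) atTop (𝓝 (σS X x))

variable {h 𝓚 : Type*}
  [NormedAddCommGroup h] [InnerProductSpace ℂ h] [CompleteSpace h]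
  [NormedAddCommGroup 𝓚] [InnerProductSpace ℂ 𝓚] [CompleteSpace 𝓚]

/-- An abstract presentation of the Hilbert-space tensor product `𝓚 = h ⊗ 𝓕` of
the initial space `h` and Fock space `𝓕`, with the ampliations
`X ↦ I_h ⊗ X` of `B(𝓕)` and `B ↦ B ⊗ I_𝓕` of `B(h)`. -/
structure AmpSpec (𝓕 h 𝓚 : Type*) [NormedAddCommGroup 𝓕] [InnerProductSpace ℂ 𝓕]
    [CompleteSpace 𝓕] [NormedAddCommGroup h] [InnerProductSpace ℂ h] [CompleteSpace h]
    [NormedAddCommGroup 𝓚] [InnerProductSpace ℂ 𝓚] [CompleteSpace 𝓚] where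
  tens : h →ₗ[ℂ] 𝓕 →ₗ[ℂ] 𝓚
  inner_tens : ∀ (u v : h) (x y : 𝓕), ⟪tens u x, tens v y⟫ = ⟪u, v⟫ * ⟪x, y⟫
  dense_tens : Dense (Submodule.span ℂ {z : 𝓚 | ∃ u x, z = tens u x} : Set 𝓚)
  amp : (𝓕 →L[ℂ] 𝓕) → 𝓚 →L[ℂ] 𝓚
  amp_tens : ∀ (X : 𝓕 →L[ℂ] 𝓕) (u : h) (x : 𝓕), amp X (tens u x) = tens u (X x)
  ampH : (h →L[ℂ] h) → 𝓚 →L[ℂ] 𝓚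
  ampH_tens : ∀ (B : h →L[ℂ] h) (u : h) (x : 𝓕), ampH B (tens u x) = tens (B u) x

/-- `X ∈ M ⊗̄ B(𝓕)` for the von Neumann algebra `M ⊆ B(h)`: `X` commutes with
`B ⊗ I_𝓕` for every `B` in the commutant of `M`. -/
def InVNTensor (A : AmpSpec 𝓕 h 𝓚) (M : Set (h →L[ℂ] h)) (X : 𝓚 →L[ℂ] 𝓚) : Prop :=
  ∀ B : h →L[ℂ] h, (∀ Y ∈ M, B ∘L Y = Y ∘L B) → X ∘L A.ampH B = A.ampH B ∘L X

/-- `V` is a `p`-adapted process: `V_t = V_{t)} ⊗ P_{[t}`, where `P_{[t}` is the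
second quantisation of the pointwise action `pH` of the projection `p` on
`L²([t,∞); k)`; expressed through matrix elements between exponential vectors. -/
def PAdapted (E : FockSpec H 𝓕) (A : AmpSpec 𝓕 h 𝓚) (pH : H →L[ℂ] H)
    (V : ℝ≥0∞ → 𝓚 →L[ℂ] 𝓚) : Prop :=
  ∀ t : ℝ≥0∞, t ≠ ⊤ → ∀ (u v : h) (f g : H),
    ⟪A.tens u (E.eV f), V t (A.tens v (E.eV g))⟫ =
      ⟪A.tens u (E.eV (E.cut t f)), V t (A.tens v (E.eV (E.cut t g)))⟫ *
        Complex.exp ⟪f - E.cut t f, pH (g - E.cut t g)⟫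

/-- `Vhat` is the identity-adapted projection `V̂` of the `p`-adapted process `V`:
`V̂_t = V_{t)} ⊗ I_{[t}`. -/
def IsHatOf (E : FockSpec H 𝓕) (A : AmpSpec 𝓕 h 𝓚)
    (V Vhat : ℝ≥0∞ → 𝓚 →L[ℂ] 𝓚) : Prop :=
  ∀ t : ℝ≥0∞, t ≠ ⊤ → ∀ (u v : h) (f g : H),
    ⟪A.tens u (E.eV f), Vhat t (A.tens v (E.eV g))⟫ =
      ⟪A.tens u (E.eV (E.cut t f)), V t (A.tens v (E.eV (E.cut t g)))⟫ *
        Complex.exp ⟪f - E.cut t f, g - E.cut t g⟫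

/-- The process is isometric: `V_{t)}^* V_{t)} = I`, i.e. `V̂_t` is isometric. -/
def IsometricHat (Vhat : ℝ≥0∞ → 𝓚 →L[ℂ] 𝓚) : Prop :=
  ∀ t : ℝ≥0∞, t ≠ ⊤ → ∀ z : 𝓚, ‖Vhat t z‖ = ‖z‖

/-- `Sig` is the CCR flow extended by ampliation to `B(h ⊗ 𝓕)`. -/
def IsAmpCCRFlow (E : FockSpec H 𝓕) (A : AmpSpec 𝓕 h 𝓚)
    (Sig : ℝ≥0∞ → (𝓚 →L[ℂ] 𝓚) → 𝓚 →L[ℂ] 𝓚) : Prop :=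
  ∀ s : ℝ≥0∞, s ≠ ⊤ → ∀ (X : 𝓚 →L[ℂ] 𝓚) (u v : h) (f g : H),
    ⟪A.tens u (E.eV f), Sig s X (A.tens v (E.eV g))⟫ =
      Complex.exp ⟪E.cut s f, E.cut s g⟫ *
        ⟪A.tens u (E.eV (E.shiftL s f)), X (A.tens v (E.eV (E.shiftL s g)))⟫

/-- The (left operator Markovian) cocycle identity `V_{s+t} = V̂_s σ_s(V_t)`. -/
def IsLeftCocycle (Sig : ℝ≥0∞ → (𝓚 →L[ℂ] 𝓚) → 𝓚 →L[ℂ] 𝓚)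
    (V Vhat : ℝ≥0∞ → 𝓚 →L[ℂ] 𝓚) : Prop :=
  ∀ s t : ℝ≥0∞, s ≠ ⊤ → t ≠ ⊤ → V (s + t) = Vhat s ∘L Sig s (V t)

/-- Strong continuity of the process on `[0, ∞)`. -/
def StrongContOn (V : ℝ≥0∞ → 𝓚 →L[ℂ] 𝓚) : Prop :=
  ∀ z : 𝓚, ContinuousOn (fun t => V t z) {t : ℝ≥0∞ | t ≠ ⊤}

/-- The Riemann sum `V_{S,π} = Σ_{j=1}^{n+1} V_{π_j} S((π_{j-1}, π_j])`, with the
stop time `S` extended by ampliation to `h ⊗ 𝓕`. -/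
def VSum {E : FockSpec H 𝓕} (A : AmpSpec 𝓕 h 𝓚) (S : QST E) {t : ℝ≥0∞}
    (V : ℝ≥0∞ → 𝓚 →L[ℂ] 𝓚) (π : StopPartition t) : 𝓚 →L[ℂ] 𝓚 :=
  ∑ s ∈ π.pts.erase 0, V s ∘L A.amp (S.meas (Set.Ioc (π.pred s) s))

/-! Since `T({t₀}) = I`, the product measure `S ⊗ T` is carried by the line `[0, ∞] × {t₀}`, so
`(S ⋆ T)([0, u]) = (S ⊗ T)([0, u - t₀] × {t₀})`, which is `0` when `u < t₀`. On the total set of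
vectors `j_S(E_S ε(f) ⊗ Γ_S x)` this rectangle acts as `S([0, u - t₀]) ⊗ I`, and so does
`S([0, r])` itself: it cuts the Riemann sums defining `j_S(E_S ε(f) ⊗ Γ_S x)` over `[0, ∞]` down
to those over `[0, r]`, which define `j_S(E_{S,r} ε(f) ⊗ Γ_S x)`. -/

instance ContinuousLinearMap.isAddTorsionFree {V : Type*} [NormedAddCommGroup V]
    [NormedSpace ℂ V] : IsAddTorsionFree (V →L[ℂ] V) :=
  .of_isTorsionFree ℂ _

section IdempotentContent

variable {α R : Type*} [MeasurableSpace α] [Ring R]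

structure IsIdempotentContent (μ : Set α → R) : Prop where
  idem : ∀ A, IsIdempotentElem (μ A)
  union : ∀ {A B : Set α}, MeasurableSet A → MeasurableSet B → Disjoint A B →
    μ (A ∪ B) = μ A + μ B

namespace IsIdempotentContent

theorem of_complexMeasure {V : Type*} [NormedAddCommGroup V] [InnerProductSpace ℂ V]
    {μ : Set α → V →L[ℂ] V} (idem : ∀ A, IsIdempotentElem (μ A))
    (c : V → V → ComplexMeasure α)
    (hc : ∀ (x y : V) (A : Set α), MeasurableSet A → c x y A = ⟪x, μ A y⟫) :
    IsIdempotentContent μ where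
  idem := idem
  union {A B} hA hB hd := by
    refine ContinuousLinearMap.ext fun y => ext_inner_left ℂ fun x => ?_
    rw [add_apply, inner_add_right, ← hc x y A hA, ← hc x y B hB,
      ← hc x y _ (hA.union hB), (c x y).of_union hd hA hB]

variable {μ : Set α → R}

theorem empty (hμ : IsIdempotentContent μ) : μ ∅ = 0 := by
  simpa using hμ.union .empty .empty (Set.disjoint_empty ∅)

theorem mul_eq_zero [IsAddTorsionFree R] (hμ : IsIdempotentContent μ) {A B : Set α}
    (hA : MeasurableSet A) (hB : MeasurableSet B) (hd : Disjoint A B) : μ A * μ B = 0 :=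
  (hμ.idem A).mul_eq_zero_of_anticommute <|
    ((hμ.idem A).add_iff (hμ.idem B)).mp (hμ.union hA hB hd ▸ hμ.idem (A ∪ B))

theorem mul_eq_inter [IsAddTorsionFree R] (hμ : IsIdempotentContent μ) {A B : Set α}
    (hA : MeasurableSet A) (hB : MeasurableSet B) : μ A * μ B = μ (A ∩ B) := by
  have hA' : μ A = μ (A ∩ B) + μ (A \ B) := by
    rw [← hμ.union (hA.inter hB) (hA.diff hB)
      (Set.disjoint_sdiff_right.mono_left Set.inter_subset_right), Set.inter_union_sdiff]
  have hB' : μ B = μ (A ∩ B) + μ (B \ A) := by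
    rw [← hμ.union (hA.inter hB) (hB.diff hA)
      (Set.disjoint_sdiff_right.mono_left Set.inter_subset_left), Set.inter_comm,
      Set.inter_union_sdiff]
  rw [hA', hB', add_mul, mul_add, mul_add, (hμ.idem _).eq,
    hμ.mul_eq_zero (hA.inter hB) (hB.diff hA)
      (Set.disjoint_sdiff_right.mono_left Set.inter_subset_left),
    hμ.mul_eq_zero (hA.diff hB) (hA.inter hB)
      (Set.disjoint_sdiff_left.mono_right Set.inter_subset_right),
    hμ.mul_eq_zero (hA.diff hB) (hB.diff hA) disjoint_sdiff_sdiff]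
  simp

theorem eq_inter_of_eq_one [IsAddTorsionFree R] (hμ : IsIdempotentContent μ) {C D : Set α}
    (hD : MeasurableSet D) (h1 : μ D = 1) (hC : MeasurableSet C) : μ C = μ (C ∩ D) := by
  rw [← hμ.mul_eq_inter hC hD, h1, mul_one]

end IsIdempotentContent

end IdempotentContent

theorem QST.isIdempotentContent (S : QST E) : IsIdempotentContent S.meas :=
  .of_complexMeasure S.idem S.cm S.cm_apply

namespace IsSpectralProd

variable {P : Set (ℝ≥0∞ × ℝ≥0∞) → 𝓕 →L[ℂ] 𝓕}

theorem empty (hP : IsSpectralProd P) : P ∅ = 0 := by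
  refine ContinuousLinearMap.ext fun y => ext_inner_left ℂ fun x => ?_
  have h := hP.2.2.2 (fun _ => ∅) (fun _ => .empty) (fun _ _ _ => Set.disjoint_empty ∅) x y
  rw [Set.iUnion_empty] at h
  simpa using tendsto_nhds_unique tendsto_const_nhds h.summable.tendsto_atTop_zero

open Classical in
def innerMeasure (hP : IsSpectralProd P) (x y : 𝓕) : ComplexMeasure (ℝ≥0∞ × ℝ≥0∞) where
  measureOf' A := if MeasurableSet A then ⟪x, P A y⟫ else 0
  empty' := by simp [hP.empty]
  not_measurable' _ hA := if_neg hA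
  m_iUnion' A hA hd := by simpa [hA, MeasurableSet.iUnion hA] using hP.2.2.2 A hA hd x y

theorem isIdempotentContent (hP : IsSpectralProd P) : IsIdempotentContent P :=
  .of_complexMeasure hP.2.1 hP.innerMeasure fun _ _ _ hA => by simp [innerMeasure, hA]

end IsSpectralProd

namespace StopPartition

variable {t r : ℝ≥0∞}

def coarsest (t : ℝ≥0∞) : StopPartition t :=
  ⟨{0, t}, by simp, by simp, by simp⟩

instance : Nonempty (StopPartition t) := ⟨coarsest t⟩

instance : IsDirected (StopPartition t) (· ≤ ·) :=
  ⟨fun π π' =>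
    ⟨⟨π.pts ∪ π'.pts, Finset.mem_union_left _ π.zero_mem, Finset.mem_union_left _ π.top_mem,
        fun s hs => (Finset.mem_union.mp hs).elim (π.mem_le s) (π'.mem_le s)⟩,
      Finset.subset_union_left, Finset.subset_union_right⟩⟩

def extend (ρ : StopPartition r) : StopPartition ⊤ :=
  ⟨insert ⊤ ρ.pts, Finset.mem_insert_of_mem ρ.zero_mem, Finset.mem_insert_self _ _,
    fun _ _ => le_top⟩

def restrict (π : StopPartition t) (r : ℝ≥0∞) : StopPartition r :=
  ⟨insert r (π.pts.filter (· ≤ r)), by simp [π.zero_mem], Finset.mem_insert_self _ _,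
    by simp +contextual⟩

theorem restrict_mono : Monotone fun π : StopPartition t => π.restrict r :=
  fun _ _ h => Finset.insert_subset_insert _ (Finset.filter_subset_filter _ h)

theorem tendsto_restrict : Tendsto (fun π : StopPartition ⊤ => π.restrict r) atTop atTop :=
  tendsto_atTop_atTop_of_monotone restrict_mono fun ρ =>
    ⟨ρ.extend, fun s hs => Finset.mem_insert_of_mem <|
      Finset.mem_filter.mpr ⟨Finset.mem_insert_of_mem hs, ρ.mem_le s hs⟩⟩

theorem restrict_pts_of_mem {π : StopPartition t} (hr : r ∈ π.pts) :
    (π.restrict r).pts = π.pts.filter (· ≤ r) :=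
  Finset.insert_eq_of_mem (Finset.mem_filter.mpr ⟨hr, le_rfl⟩)

theorem pred_restrict (π : StopPartition t) {u : ℝ≥0∞} (hu : u ≤ r) :
    (π.restrict r).pred u = π.pred u := by
  unfold pred restrict
  congr 1
  ext s
  simp only [Finset.mem_filter, Finset.mem_insert]
  constructor
  · rintro ⟨rfl | ⟨hs, -⟩, hsu⟩
    · exact absurd (hsu.trans_le hu) (lt_irrefl s)
    · exact ⟨hs, hsu⟩
  · exact fun ⟨hs, hsu⟩ => ⟨.inr ⟨hs, (hsu.trans_le hu).le⟩, hsu⟩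

theorem le_pred {π : StopPartition t} {s : ℝ≥0∞} (hr : r ∈ π.pts) (hrs : r < s) :
    r ≤ π.pred s :=
  Finset.le_sup (f := id) (Finset.mem_filter.mpr ⟨hr, hrs⟩)

end StopPartition

namespace QST

variable {t r : ℝ≥0∞}

theorem meas_Iic_sum (S : QST E) (v : ℝ≥0∞ → 𝓕) {π : StopPartition t} (hr : r ∈ π.pts) :
    S.meas {s | s ≤ r} (S.sum v π) = S.sum v (π.restrict r) := by
  have hS := S.isIdempotentContent
  have hterm : ∀ s ∈ π.pts.erase 0, S.meas {s | s ≤ r} (S.meas (Set.Ioc (π.pred s) s) (v s)) =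
      if s ≤ r then S.meas (Set.Ioc ((π.restrict r).pred s) s) (v s) else 0 := by
    intro s _
    rw [← mul_apply_eq_comp,
      hS.mul_eq_inter (A := {s | s ≤ r}) measurableSet_Iic measurableSet_Ioc]
    split_ifs with hsr
    · rw [π.pred_restrict hsr, Set.inter_eq_right.mpr fun _ hx => hx.2.trans hsr]
    · have hpred := StopPartition.le_pred hr (not_le.mp hsr)
      rw [Set.disjoint_iff_inter_eq_empty.mp ?_, hS.empty, zero_apply]
      exact Set.disjoint_left.mpr fun x hxr hx => (not_lt.mpr hxr) (hpred.trans_lt hx.1)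
  rw [sum, map_sum, Finset.sum_congr rfl hterm, ← Finset.sum_filter, sum,
    StopPartition.restrict_pts_of_mem hr, Finset.filter_erase]

theorem meas_Iic_apply_of_tendsto (S : QST E) {v : ℝ≥0∞ → 𝓕} {L L' : 𝓕}
    (h : Tendsto (fun π : StopPartition ⊤ => S.sum v π) atTop (𝓝 L))
    (hr : Tendsto (fun π : StopPartition r => S.sum v π) atTop (𝓝 L')) :
    S.meas {s | s ≤ r} L = L' := by
  refine tendsto_nhds_unique (((S.meas _).continuous.tendsto L).comp h) ?_
  refine (hr.comp StopPartition.tendsto_restrict).congr' ?_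
  filter_upwards [eventually_ge_atTop (StopPartition.coarsest r).extend] with π hπ
  exact (S.meas_Iic_sum v (hπ (by simp [StopPartition.extend, StopPartition.coarsest]))).symm

end QST

namespace IsJS

variable {S : QST E} {ESt : ℝ≥0∞ → 𝓕 →L[ℂ] 𝓕} {ΓS : 𝓕 →L[ℂ] 𝓕} {jS : 𝓕 →ₗ[ℂ] 𝓕 →ₗ[ℂ] 𝓕}

theorem norm_apply (hj : IsJS S ESt ΓS jS) (a x : 𝓕) :
    ‖jS (ESt ⊤ a) (ΓS x)‖ = ‖ESt ⊤ a‖ * ‖ΓS x‖ := by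
  have h := hj.2.1 a a x x
  simp only [inner_self_eq_norm_sq_to_K] at h
  exact (sq_eq_sq₀ (norm_nonneg _) (by positivity)).mp (by rw [mul_pow]; exact_mod_cast h)

theorem ext (hj : IsJS S ESt ΓS jS) {A B : 𝓕 →L[ℂ] 𝓕}
    (h : ∀ (f : H) (x : 𝓕), A (jS (ESt ⊤ (E.eV f)) (ΓS x)) = B (jS (ESt ⊤ (E.eV f)) (ΓS x))) :
    A = B := by
  refine ContinuousLinearMap.ext_on hj.2.2 ?_
  rintro _ ⟨a, x, rfl⟩
  let Ψ : 𝓕 →L[ℂ] 𝓕 := ((jS.flip (ΓS x)).comp (ESt ⊤ : 𝓕 →ₗ[ℂ] 𝓕)).mkContinuous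
    (‖ESt ⊤‖ * ‖ΓS x‖) fun b => by
      rw [LinearMap.comp_apply, LinearMap.flip_apply, ContinuousLinearMap.coe_coe,
        hj.norm_apply, mul_right_comm]
      gcongr
      exact (ESt ⊤).le_opNorm b
  have hΨ : A ∘L Ψ = B ∘L Ψ :=
    ContinuousLinearMap.ext_on E.dense_eV (by rintro _ ⟨f, rfl⟩; exact h f x)
  exact congr($hΨ a)

theorem meas_Iic_apply (hESt : IsTimeProj S ESt) (hj : IsJS S ESt ΓS jS) (r : ℝ≥0∞) (f : H)
    (x : 𝓕) : S.meas {s | s ≤ r} (jS (ESt ⊤ (E.eV f)) (ΓS x)) =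
      jS (S.meas {s | s ≤ r} (ESt ⊤ (E.eV f))) (ΓS x) := by
  rcases eq_or_ne r 0 with rfl | hr
  · simp [S.zero]
  · have hr := pos_iff_ne_zero.mpr hr
    rw [S.meas_Iic_apply_of_tendsto (hj.1 ⊤ ENNReal.zero_lt_top f x) (hj.1 r hr f x),
      S.meas_Iic_apply_of_tendsto ((hESt ⊤ ENNReal.zero_lt_top).2.2 f) ((hESt r hr).2.2 f)]

end IsJS

theorem convolution_with_deterministic_general
    (E : FockSpec H 𝓕) (S T : QST E)
    (t₀ : ℝ≥0∞) (ht₀' : t₀ ≠ ⊤) (hdet : T.meas {t₀} = 1)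
    (ESt : ℝ≥0∞ → 𝓕 →L[ℂ] 𝓕) (hESt : IsTimeProj S ESt)
    (ΓS : 𝓕 →L[ℂ] 𝓕)
    (jS : 𝓕 →ₗ[ℂ] 𝓕 →ₗ[ℂ] 𝓕) (hjS : IsJS S ESt ΓS jS)
    (P : Set (ℝ≥0∞ × ℝ≥0∞) → 𝓕 →L[ℂ] 𝓕) (hP : IsProdOf S T ESt ΓS jS P) :
    (∀ u : ℝ≥0∞, u < t₀ → P {p | p.1 + p.2 ≤ u} = 0) ∧
      ∀ u : ℝ≥0∞, t₀ ≤ u → P {p | p.1 + p.2 ≤ u} = S.meas {s | s ≤ u - t₀} := by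
  have hPc := hP.1.isIdempotentContent
  have hline : MeasurableSet (Set.univ ×ˢ {t₀} : Set (ℝ≥0∞ × ℝ≥0∞)) :=
    MeasurableSet.univ.prod (measurableSet_singleton t₀)
  have hline_one : P (Set.univ ×ˢ {t₀}) = 1 := hjS.ext fun f x => by
    simp [hP.2 _ _ .univ (measurableSet_singleton t₀), S.total, hdet]
  have hP_eq (u : ℝ≥0∞) : P {p | p.1 + p.2 ≤ u} = P ({p | p.1 + p.2 ≤ u} ∩ Set.univ ×ˢ {t₀}) :=
    hPc.eq_inter_of_eq_one hline hline_one
      (measurableSet_le (measurable_fst.add measurable_snd) measurable_const)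
  refine ⟨fun u hu => ?_, fun u hu => ?_⟩
  · rw [hP_eq, Set.disjoint_iff_inter_eq_empty.mp ?_, hPc.empty]
    refine Set.disjoint_left.mpr ?_
    rintro ⟨s, t⟩ hst ⟨-, rfl : t = t₀⟩
    exact (le_add_self.trans hst).not_gt hu
  · have hset : {p : ℝ≥0∞ × ℝ≥0∞ | p.1 + p.2 ≤ u} ∩ Set.univ ×ˢ {t₀} =
        {s | s ≤ u - t₀} ×ˢ {t₀} := by
      ext ⟨s, t⟩
      rcases eq_or_ne t t₀ with rfl | ht
      · simp [ENNReal.le_sub_iff_add_le_right ht₀' hu]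
      · simp [ht]
    rw [hP_eq, hset]
    exact hjS.ext fun f x => by
      rw [hP.2 {s | s ≤ u - t₀} _ measurableSet_Iic (measurableSet_singleton t₀), hdet,
        one_apply_eq_self, hjS.meas_Iic_apply hESt]

/-- convolution with a deterministic stop time `T({t₀}) = I`,
`t₀ ∈ (0, ∞)`, is the translate `S + t₀`:
`(S ⋆ T)([0,u]) = 0` for `u < t₀` and `(S ⋆ T)([0,u]) = S([0, u - t₀])` for
`u ≥ t₀`. -/
theorem convolution_with_deterministic
    (E : FockSpec H 𝓕) (S T : QST E) (hS : S.Finite) (hT : T.Finite)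
    (t₀ : ℝ≥0∞) (ht₀ : 0 < t₀) (ht₀' : t₀ ≠ ⊤) (hdet : T.meas {t₀} = 1)
    (ESt : ℝ≥0∞ → 𝓕 →L[ℂ] 𝓕) (hESt : IsTimeProj S ESt)
    (ΓS : 𝓕 →L[ℂ] 𝓕) (hΓiso : ∀ x : 𝓕, ‖ΓS x‖ = ‖x‖) (hΓS : IsStoppedShift S ΓS)
    (jS : 𝓕 →ₗ[ℂ] 𝓕 →ₗ[ℂ] 𝓕) (hjS : IsJS S ESt ΓS jS)
    (P : Set (ℝ≥0∞ × ℝ≥0∞) → 𝓕 →L[ℂ] 𝓕) (hP : IsProdOf S T ESt ΓS jS P) :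
    (∀ u : ℝ≥0∞, u < t₀ → P {p | p.1 + p.2 ≤ u} = 0) ∧
      ∀ u : ℝ≥0∞, t₀ ≤ u → P {p | p.1 + p.2 ≤ u} = S.meas {s | s ≤ u - t₀} :=
  convolution_with_deterministic_general E S T t₀ ht₀' hdet ESt hESt ΓS jS hjS P hP

end
end

section
/- Let S be a finite quantum stop time, let V be an isometric p-adapted cocycle, and let t ∈ (0,∞). For any finite partition π = {0 = π_0 < ⋯ < π_{n+1} = t} of [0,t], the Riemann sum V_{S,π} := Σ_{j=1}^{n+1} V_{π_j} S((π_{j−1}, π_j]) satisfies ‖V_{S,π} z‖ ≤ ‖S([0,t]) z‖ for all z ∈ h ⊗ F. -/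
/- ------------------------------------------------------------------
Common framework: an abstract axiomatisation of Boson Fock space
`𝓕 = Γ(L²([0,∞); k))` over `H = L²([0,∞); k)`, quantum stop times,
stop-time integrals (as limits of Riemann sums over the net of finite
partitions of `[0, t] ⊆ [0, ∞]` ordered by refinement), the CCR flow,
and operator cocycles, following Belton–Sinha,
"Stopping the CCR flow and its isometric cocycles".
------------------------------------------------------------------ -/

open Filter MeasureTheory Topology
open scoped ENNReal

noncomputable section

local notation "⟪" x ", " y "⟫" => @inner ℂ _ _ x y

variable {H 𝓕 : Type*}
  [NormedAddCommGroup H] [InnerProductSpace ℂ H] [CompleteSpace H]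
  [NormedAddCommGroup 𝓕] [InnerProductSpace ℂ 𝓕] [CompleteSpace 𝓕]

variable {E : FockSpec H 𝓕}

variable {h 𝓚 : Type*}
  [NormedAddCommGroup h] [InnerProductSpace ℂ h] [CompleteSpace h]
  [NormedAddCommGroup 𝓚] [InnerProductSpace ℂ 𝓚] [CompleteSpace 𝓚]

/-!
Write `V_{S,π} z = ∑ⱼ V_{πⱼ} Rⱼ z` with `Rⱼ = S((πⱼ₋₁, πⱼ])`: these are pairwise orthogonal
projections with `Rⱼ = Rⱼ S([0,t])`. Since `V_r = V̂_r (I_{r)} ⊗ P_{[r})` with `V̂_r` isometric,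
each `V_r` is a contraction. For `r < r'` the cocycle identity gives
`V_r^* V_{r'} = (I_{r)} ⊗ P_{[r}) σ_r(V_{r'-r})`, and both factors act only on the future of `r`,
so they commute with the `r`-adapted projection `Rⱼ`; hence the summands are mutually orthogonal
and `‖V_{S,π} z‖² = ∑ⱼ ‖V_{πⱼ} Rⱼ z‖² ≤ ∑ⱼ ‖Rⱼ S([0,t]) z‖² ≤ ‖S([0,t]) z‖²`.
-/

open ContinuousLinearMap (adjoint adjoint_inner_left adjoint_inner_right comp_apply)

section Hilbert

variable {K : Type*} [NormedAddCommGroup K] [InnerProductSpace ℂ K]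

theorem eq_of_inner_eq_of_dense_span {s : Set K} (hs : Dense (Submodule.span ℂ s : Set K))
    {x y : K} (hxy : ∀ z ∈ s, ⟪z, x⟫ = ⟪z, y⟫) : x = y := by
  have hxy : innerSL ℂ x = innerSL ℂ y := ContinuousLinearMap.ext_on hs fun z hz => by
    simp only [innerSL_apply_apply]
    rw [← inner_conj_symm, hxy z hz, inner_conj_symm]
  exact ext_inner_right ℂ fun v => by simpa using congr($hxy v)

theorem clm_ext_of_inner_eq_of_dense_span {s : Set K} (hs : Dense (Submodule.span ℂ s : Set K))
    {X Y : K →L[ℂ] K} (hXY : ∀ z ∈ s, ∀ w ∈ s, ⟪z, X w⟫ = ⟪z, Y w⟫) : X = Y :=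
  ContinuousLinearMap.ext_on hs fun w hw => eq_of_inner_eq_of_dense_span hs fun z hz => hXY z hz w hw

theorem norm_sum_sq_eq_of_pairwise_inner_eq_zero {ι : Type*} (s : Finset ι) (x : ι → K)
    (hx : (s : Set ι).Pairwise fun i j => ⟪x i, x j⟫ = 0) :
    ‖∑ i ∈ s, x i‖ ^ 2 = ∑ i ∈ s, ‖x i‖ ^ 2 := by
  simp_rw [@norm_sq_eq_re_inner ℂ, sum_inner, inner_sum]
  rw [map_sum]
  refine Finset.sum_congr rfl fun i hi => ?_
  rw [Finset.sum_eq_single_of_mem i hi fun j hj hji => hx hi hj hji.symm]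

theorem isStarProjection_sum {R ι : Type*} [NonUnitalNonAssocSemiring R] [StarRing R]
    (s : Finset ι) (p : ι → R) (hp : ∀ i ∈ s, IsStarProjection (p i))
    (horth : (s : Set ι).Pairwise fun i j => p i * p j = 0) :
    IsStarProjection (∑ i ∈ s, p i) := by
  classical
  induction s using Finset.induction_on with
  | empty => simp [IsStarProjection.zero]
  | insert a s ha ih =>
    rw [Finset.sum_insert ha]
    refine (hp a (s.mem_insert_self a)).add
      (ih (fun i hi => hp i (Finset.mem_insert_of_mem hi))
        (horth.mono (by simp))) ?_
    rw [Finset.mul_sum]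
    exact Finset.sum_eq_zero fun i hi =>
      horth (by simp) (by simp [hi]) (ne_of_mem_of_not_mem hi ha).symm

variable [CompleteSpace K]

theorem IsStarProjection.norm_apply_le {p : K →L[ℂ] K} (hp : IsStarProjection p) (x : K) :
    ‖p x‖ ≤ ‖x‖ :=
  (p.le_of_opNorm_le hp.norm_le x).trans_eq (one_mul _)

theorem IsStarProjection.inner_apply_apply_eq_zero {p q : K →L[ℂ] K} (hp : IsStarProjection p)
    (hpq : p * q = 0) (x y : K) : ⟪p x, q y⟫ = 0 := by
  rw [← adjoint_inner_right, hp.isSelfAdjoint.adjoint_eq, ← comp_apply,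
    ← ContinuousLinearMap.mul_def, hpq, zero_apply, inner_zero_right]

theorem sum_norm_sq_apply_le {ι : Type*} (s : Finset ι) (p : ι → K →L[ℂ] K)
    (hp : ∀ i ∈ s, IsStarProjection (p i))
    (horth : (s : Set ι).Pairwise fun i j => p i * p j = 0) (x : K) :
    ∑ i ∈ s, ‖p i x‖ ^ 2 ≤ ‖x‖ ^ 2 := by
  rw [← norm_sum_sq_eq_of_pairwise_inner_eq_zero s _ fun i hi j hj hij =>
    (hp i hi).inner_apply_apply_eq_zero (horth hi hj hij) x x, ← sum_apply]
  exact pow_le_pow_left₀ (norm_nonneg _) ((isStarProjection_sum s p hp horth).norm_apply_le x) 2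

theorem norm_sum_apply_le_of_orthogonal {ι : Type*} [LinearOrder ι] (s : Finset ι)
    (W p : ι → K →L[ℂ] K) (Q : K →L[ℂ] K) (hW : ∀ i ∈ s, ∀ x, ‖W i x‖ ≤ ‖x‖)
    (hp : ∀ i ∈ s, IsStarProjection (p i))
    (horth : (s : Set ι).Pairwise fun i j => p i * p j = 0) (hpQ : ∀ i ∈ s, p i * Q = p i)
    (x : K) (hWp : ∀ i ∈ s, ∀ j ∈ s, i < j → ⟪W i (p i x), W j (p j x)⟫ = 0) :
    ‖∑ i ∈ s, W i (p i x)‖ ≤ ‖Q x‖ := by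
  have hWp' : (s : Set ι).Pairwise fun i j => ⟪W i (p i x), W j (p j x)⟫ = 0 :=
    fun i hi j hj hij => by
      rcases hij.lt_or_gt with hlt | hgt
      · exact hWp i hi j hj hlt
      · rw [← inner_conj_symm, hWp j hj i hi hgt, map_zero]
  rw [← pow_le_pow_iff_left₀ (norm_nonneg _) (norm_nonneg _) two_ne_zero,
    norm_sum_sq_eq_of_pairwise_inner_eq_zero s _ hWp']
  calc ∑ i ∈ s, ‖W i (p i x)‖ ^ 2 ≤ ∑ i ∈ s, ‖p i (Q x)‖ ^ 2 :=
        Finset.sum_le_sum fun i hi => by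
          rw [← mul_apply_eq_comp (p i) Q, hpQ i hi]
          exact pow_le_pow_left₀ (norm_nonneg _) (hW i hi _) 2
    _ ≤ ‖Q x‖ ^ 2 := sum_norm_sq_apply_le s p hp horth (Q x)

end Hilbert

namespace AmpSpec

variable (A : AmpSpec 𝓕 h 𝓚)

theorem norm_tens (u : h) (x : 𝓕) : ‖A.tens u x‖ = ‖u‖ * ‖x‖ := by
  have hsq : ‖A.tens u x‖ ^ 2 = (‖u‖ * ‖x‖) ^ 2 := by
    rw [@norm_sq_eq_re_inner ℂ, A.inner_tens, inner_self_eq_norm_sq_to_K,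
      inner_self_eq_norm_sq_to_K, ← RCLike.ofReal_pow, ← RCLike.ofReal_pow,
      ← RCLike.ofReal_mul, RCLike.ofReal_re, mul_pow]
  exact (sq_eq_sq₀ (norm_nonneg _) (by positivity)).1 hsq

def tensL (u : h) : 𝓕 →L[ℂ] 𝓚 :=
  (A.tens u).mkContinuous ‖u‖ fun x => (A.norm_tens u x).le

theorem dense_span_tens_eV (E : FockSpec H 𝓕) :
    Dense (Submodule.span ℂ {z : 𝓚 | ∃ u f, z = A.tens u (E.eV f)} : Set 𝓚) := by
  set D := Submodule.span ℂ {z : 𝓚 | ∃ u f, z = A.tens u (E.eV f)}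
  have hmem : ∀ u x, A.tens u x ∈ D.topologicalClosure := by
    intro u x
    have hle :
        Submodule.span ℂ (Set.range E.eV) ≤ D.topologicalClosure.comap (A.tensL u).toLinearMap := by
      rw [Submodule.span_le]
      rintro _ ⟨f, rfl⟩
      exact D.le_topologicalClosure (Submodule.subset_span ⟨u, f, rfl⟩)
    have hclosed : IsClosed (D.topologicalClosure.comap (A.tensL u).toLinearMap : Set 𝓕) :=
      D.isClosed_topologicalClosure.preimage (A.tensL u).continuous
    have htop := Submodule.topologicalClosure_minimal _ hle hclosed
    rw [Submodule.dense_iff_topologicalClosure_eq_top.1 E.dense_eV, top_le_iff] at htop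
    exact Submodule.mem_comap.1 (htop ▸ Submodule.mem_top : x ∈ _)
  have hspan : Submodule.span ℂ {z : 𝓚 | ∃ u x, z = A.tens u x} ≤ D.topologicalClosure := by
    rw [Submodule.span_le]
    rintro _ ⟨u, x, rfl⟩
    exact hmem u x
  rw [Submodule.dense_iff_topologicalClosure_eq_top, eq_top_iff,
    ← Submodule.dense_iff_topologicalClosure_eq_top.1 A.dense_tens]
  exact Submodule.topologicalClosure_minimal _ hspan D.isClosed_topologicalClosure

theorem ext_inner_tens {x y : 𝓚} (hxy : ∀ u b, ⟪A.tens u b, x⟫ = ⟪A.tens u b, y⟫) : x = y :=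
  eq_of_inner_eq_of_dense_span A.dense_tens <| by rintro _ ⟨u, b, rfl⟩; exact hxy u b

theorem ext_inner_tens_eV (E : FockSpec H 𝓕) {x y : 𝓚}
    (hxy : ∀ u f, ⟪A.tens u (E.eV f), x⟫ = ⟪A.tens u (E.eV f), y⟫) : x = y :=
  eq_of_inner_eq_of_dense_span (A.dense_span_tens_eV E) <| by rintro _ ⟨u, f, rfl⟩; exact hxy u f

theorem clm_ext_tens {X Y : 𝓚 →L[ℂ] 𝓚} (hXY : ∀ v b, X (A.tens v b) = Y (A.tens v b)) : X = Y :=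
  ContinuousLinearMap.ext_on A.dense_tens <| by rintro _ ⟨v, b, rfl⟩; exact hXY v b

theorem clm_ext_tens_eV (E : FockSpec H 𝓕) {X Y : 𝓚 →L[ℂ] 𝓚}
    (hXY : ∀ v g, X (A.tens v (E.eV g)) = Y (A.tens v (E.eV g))) : X = Y :=
  ContinuousLinearMap.ext_on (A.dense_span_tens_eV E) <| by rintro _ ⟨v, g, rfl⟩; exact hXY v g

theorem clm_ext_inner_tens_eV (E : FockSpec H 𝓕) {X Y : 𝓚 →L[ℂ] 𝓚}
    (hXY : ∀ u f v g, ⟪A.tens u (E.eV f), X (A.tens v (E.eV g))⟫ =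
      ⟪A.tens u (E.eV f), Y (A.tens v (E.eV g))⟫) : X = Y :=
  clm_ext_of_inner_eq_of_dense_span (A.dense_span_tens_eV E) <| by
    rintro _ ⟨u, f, rfl⟩ _ ⟨v, g, rfl⟩; exact hXY u f v g

theorem amp_comp (X Y : 𝓕 →L[ℂ] 𝓕) : A.amp X ∘L A.amp Y = A.amp (X ∘L Y) :=
  A.clm_ext_tens fun v b => by simp only [comp_apply, A.amp_tens]

theorem amp_zero : A.amp 0 = 0 :=
  A.clm_ext_tens fun v b => by rw [A.amp_tens, zero_apply, zero_apply, map_zero]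

theorem adjoint_amp (X : 𝓕 →L[ℂ] 𝓕) : adjoint (A.amp X) = A.amp (adjoint X) :=
  A.clm_ext_tens fun v b => A.ext_inner_tens fun u c => by
    rw [adjoint_inner_right, A.amp_tens, A.amp_tens, A.inner_tens, A.inner_tens,
      adjoint_inner_right]

theorem isStarProjection_amp {X : 𝓕 →L[ℂ] 𝓕} (hX : IsStarProjection X) :
    IsStarProjection (A.amp X) where
  isIdempotentElem := (A.amp_comp X X).trans (congrArg A.amp hX.isIdempotentElem.eq)
  isSelfAdjoint := by
    rw [ContinuousLinearMap.isSelfAdjoint_iff', adjoint_amp, hX.isSelfAdjoint.adjoint_eq]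

theorem inner_amp_left {X : 𝓕 →L[ℂ] 𝓕} (hX : IsSelfAdjoint X) (x y : 𝓚) :
    ⟪A.amp X x, y⟫ = ⟪x, A.amp X y⟫ := by
  rw [← adjoint_inner_left, adjoint_amp, hX.adjoint_eq]

end AmpSpec

namespace FockSpec

variable (E : FockSpec H 𝓕) {r : ℝ≥0∞}

theorem ext_inner_eV {x y : 𝓕} (hxy : ∀ f, ⟪E.eV f, x⟫ = ⟪E.eV f, y⟫) : x = y :=
  eq_of_inner_eq_of_dense_span E.dense_eV <| by rintro _ ⟨f, rfl⟩; exact hxy f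

theorem cut_idem (r : ℝ≥0∞) (f : H) : E.cut r (E.cut r f) = E.cut r f := by
  rw [E.cut_min, min_self]

theorem cut_cut_of_le {b r : ℝ≥0∞} (hbr : b ≤ r) (f : H) : E.cut b (E.cut r f) = E.cut b f := by
  rw [E.cut_min, min_eq_left hbr]

theorem cut_cut_of_ge {b r : ℝ≥0∞} (hbr : b ≤ r) (f : H) : E.cut r (E.cut b f) = E.cut b f := by
  rw [E.cut_min, min_eq_right hbr]

theorem cut_sub_cut (r : ℝ≥0∞) (f : H) : E.cut r (f - E.cut r f) = 0 := by
  rw [map_sub, cut_idem, sub_self]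

theorem inner_cut_cut (r : ℝ≥0∞) (f g : H) : ⟪E.cut r f, E.cut r g⟫ = ⟪f, E.cut r g⟫ := by
  rw [E.cut_sa, cut_idem]

theorem inner_cut_sub_cut (r : ℝ≥0∞) (f g : H) : ⟪E.cut r f, g - E.cut r g⟫ = 0 := by
  rw [E.cut_sa, cut_sub_cut, inner_zero_right]

theorem inner_sub_cut_cut (r : ℝ≥0∞) (f g : H) : ⟪f - E.cut r f, E.cut r g⟫ = 0 := by
  rw [← E.cut_sa, cut_sub_cut, inner_zero_left]

theorem shiftL_sub_cut (r : ℝ≥0∞) (f : H) : E.shiftL r (f - E.cut r f) = E.shiftL r f := by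
  have hcut : E.shiftL r (E.cut r f) = 0 := ext_inner_left ℂ fun v => by
    rw [inner_zero_right, ← E.shiftL_adj, ← E.cut_sa, E.cut_shift, inner_zero_left]
  rw [map_sub, hcut, sub_zero]

theorem adjoint_past_eV (g : H) (r : ℝ≥0∞) (k : H) :
    adjoint (E.past g r) (E.eV k) = Complex.exp ⟪E.cut r g, k⟫ • E.eV (k - E.cut r k) :=
  E.ext_inner_eV fun f => by
    rw [adjoint_inner_right, E.past_eV, E.inner_eV, inner_smul_right, E.inner_eV,
      ← Complex.exp_add, inner_sub_left, inner_add_left, inner_sub_right, E.cut_sa r f k]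
    ring_nf

variable {E}

theorem AdaptedAt.sub {X Y : 𝓕 →L[ℂ] 𝓕} (hX : E.AdaptedAt X r) (hY : E.AdaptedAt Y r) :
    E.AdaptedAt (X - Y) r := fun f g => by
  simp only [sub_apply, inner_sub_right, hX f g, hY f g, sub_mul]

theorem AdaptedAt.mono {X : 𝓕 →L[ℂ] 𝓕} {b : ℝ≥0∞} (hbr : b ≤ r) (hX : E.AdaptedAt X b) :
    E.AdaptedAt X r := fun f g => by
  have hsplit : ∀ k : H, k - E.cut b k = E.cut r (k - E.cut b k) + (k - E.cut r k) := fun k => by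
    rw [map_sub, E.cut_cut_of_ge hbr]; abel
  rw [hX f g, hX (E.cut r f) (E.cut r g), E.cut_cut_of_le hbr, E.cut_cut_of_le hbr, mul_assoc,
    ← Complex.exp_add, hsplit f, hsplit g, inner_add_left, inner_add_right, inner_add_right,
    inner_cut_sub_cut, inner_sub_cut_cut, map_sub, map_sub, E.cut_cut_of_ge hbr,
    E.cut_cut_of_ge hbr, add_zero, zero_add]

theorem AdaptedAt.adjoint_past_apply_eV {R : 𝓕 →L[ℂ] 𝓕} (hR : E.AdaptedAt R r) (g f : H) :
    adjoint (E.past g r) (R (E.eV f)) =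
      ⟪E.eV (E.cut r g), R (E.eV (E.cut r f))⟫ • E.eV (f - E.cut r f) :=
  E.ext_inner_eV fun k => by
    have hcut : E.cut r (E.cut r g + k - E.cut r k) = E.cut r g := by
      rw [map_sub, map_add, E.cut_idem, E.cut_idem, add_sub_cancel_right]
    have hfuture : ⟪k, f - E.cut r f⟫ = ⟪k - E.cut r k, f - E.cut r f⟫ := by
      rw [inner_sub_left, E.inner_cut_sub_cut, sub_zero]
    rw [adjoint_inner_right, E.past_eV, hR, hcut, inner_smul_right, E.inner_eV, hfuture]
    congr 3
    abel

end FockSpec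

namespace StopPartition

variable {t : ℝ≥0∞} (π : StopPartition t) {s s' : ℝ≥0∞}

theorem pred_lt (hs : s ∈ π.pts.erase 0) : π.pred s < s :=
  (Finset.sup_lt_iff (pos_iff_ne_zero.2 (Finset.ne_of_mem_erase hs))).2 fun _ hu =>
    (Finset.mem_filter.1 hu).2

theorem le_pred_of_lt (hs : s ∈ π.pts) (hss' : s < s') : s ≤ π.pred s' :=
  Finset.le_sup (f := id) (Finset.mem_filter.2 ⟨hs, hss'⟩)

theorem disjoint_Ioc_pred (hs : s ∈ π.pts) (hs' : s' ∈ π.pts) (hss' : s ≠ s') :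
    Disjoint (Set.Ioc (π.pred s) s) (Set.Ioc (π.pred s') s') := by
  rcases hss'.lt_or_gt with hlt | hgt
  · exact Set.Ioc_disjoint_Ioc_of_le (π.le_pred_of_lt hs hlt)
  · exact (Set.Ioc_disjoint_Ioc_of_le (π.le_pred_of_lt hs' hgt)).symm

end StopPartition

namespace QST

variable {E : FockSpec H 𝓕} (S : QST E) {A B : Set ℝ≥0∞}

theorem isStarProjection_meas (A : Set ℝ≥0∞) : IsStarProjection (S.meas A) :=
  ⟨S.idem A, S.sa A⟩

theorem meas_union (hd : Disjoint A B) (hA : MeasurableSet A) (hB : MeasurableSet B) :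
    S.meas (A ∪ B) = S.meas A + S.meas B :=
  ContinuousLinearMap.ext fun y => ext_inner_left ℂ fun x => by
    rw [← S.cm_apply x y _ (hA.union hB), VectorMeasure.of_union hd hA hB, S.cm_apply x y A hA,
      S.cm_apply x y B hB, add_apply, inner_add_right]

theorem meas_comp_eq_zero_of_disjoint (hd : Disjoint A B) (hA : MeasurableSet A)
    (hB : MeasurableSet B) : S.meas A ∘L S.meas B = 0 := by
  have : IsAddTorsionFree (𝓕 →L[ℂ] 𝓕) := .of_isTorsionFree ℂ _
  have hanti := ((S.isStarProjection_meas A).isIdempotentElem.add_iff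
    (S.isStarProjection_meas B).isIdempotentElem).1
    (S.meas_union hd hA hB ▸ (S.isStarProjection_meas _).isIdempotentElem)
  exact (S.isStarProjection_meas A).isIdempotentElem.mul_eq_zero_of_anticommute hanti

theorem meas_comp_of_subset (hAB : A ⊆ B) (hA : MeasurableSet A) (hB : MeasurableSet B) :
    S.meas A ∘L S.meas B = S.meas A := by
  rw [← Set.union_sdiff_cancel hAB, S.meas_union disjoint_sdiff_self_right hA (hB.diff hA),
    ContinuousLinearMap.comp_add, S.idem,
    S.meas_comp_eq_zero_of_disjoint disjoint_sdiff_self_right hA (hB.diff hA), add_zero]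

theorem meas_Ioc {a b : ℝ≥0∞} (hab : a ≤ b) :
    S.meas (Set.Ioc a b) = S.meas (Set.Iic b) - S.meas (Set.Iic a) := by
  rw [← Set.Iic_union_Ioc_eq_Iic hab, S.meas_union (Set.Iic_disjoint_Ioc le_rfl)
    measurableSet_Iic measurableSet_Ioc, add_sub_cancel_left]

theorem adaptedAt_meas_Ioc {a b : ℝ≥0∞} (hab : a ≤ b) (hb : b ≠ ⊤) :
    E.AdaptedAt (S.meas (Set.Ioc a b)) b := by
  rw [S.meas_Ioc hab]
  exact (S.adapted b hb).sub ((S.adapted a (ne_top_of_le_ne_top hb hab)).mono hab)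

theorem meas_Ioc_pred_comp_eq_zero {t : ℝ≥0∞} (π : StopPartition t) {s s' : ℝ≥0∞}
    (hs : s ∈ π.pts) (hs' : s' ∈ π.pts) (hss' : s ≠ s') :
    S.meas (Set.Ioc (π.pred s) s) ∘L S.meas (Set.Ioc (π.pred s') s') = 0 :=
  S.meas_comp_eq_zero_of_disjoint (π.disjoint_Ioc_pred hs hs' hss') measurableSet_Ioc
    measurableSet_Ioc

theorem meas_Ioc_pred_comp_meas_le {t : ℝ≥0∞} (π : StopPartition t) {s : ℝ≥0∞}
    (hs : s ∈ π.pts) :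
    S.meas (Set.Ioc (π.pred s) s) ∘L S.meas {u | u ≤ t} = S.meas (Set.Ioc (π.pred s) s) :=
  S.meas_comp_of_subset (fun _ hu => hu.2.trans (π.mem_le s hs)) measurableSet_Ioc
    measurableSet_Iic

end QST


namespace IsAmpCCRFlow

variable {E : FockSpec H 𝓕} {A : AmpSpec 𝓕 h 𝓚} {Sig : ℝ≥0∞ → (𝓚 →L[ℂ] 𝓚) → 𝓚 →L[ℂ] 𝓚}
  {r : ℝ≥0∞}

theorem adjoint_apply (hSig : IsAmpCCRFlow E A Sig) (hr : r ≠ ⊤) (X : 𝓚 →L[ℂ] 𝓚) :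
    adjoint (Sig r X) = Sig r (adjoint X) :=
  A.clm_ext_inner_tens_eV E fun u f v g => by
    rw [adjoint_inner_right, ← inner_conj_symm, hSig r hr X v u g f, map_mul, ← Complex.exp_conj,
      inner_conj_symm, inner_conj_symm, ← adjoint_inner_right X, hSig r hr _ u v f g]

theorem apply_tens_eV (hSig : IsAmpCCRFlow E A Sig) (hr : r ≠ ⊤) (X : 𝓚 →L[ℂ] 𝓚) (v : h)
    (g : H) :
    Sig r X (A.tens v (E.eV g)) =
      A.amp (E.past g r) (Sig r X (A.tens v (E.eV (g - E.cut r g)))) :=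
  A.ext_inner_tens_eV E fun a k => by
    rw [hSig r hr X a v k g, ← adjoint_inner_left (A.amp (E.past g r)), A.adjoint_amp, A.amp_tens,
      E.adjoint_past_eV, map_smul, inner_smul_left, ← Complex.exp_conj, inner_conj_symm,
      hSig r hr X a v (k - E.cut r k) (g - E.cut r g), E.cut_sub_cut, E.cut_sub_cut,
      inner_zero_left, Complex.exp_zero, one_mul, E.shiftL_sub_cut, E.shiftL_sub_cut,
      E.inner_cut_cut]

theorem inner_tens_eV_amp_apply (hSig : IsAmpCCRFlow E A Sig) (hr : r ≠ ⊤) (X : 𝓚 →L[ℂ] 𝓚)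
    {R : 𝓕 →L[ℂ] 𝓕} (hRsa : IsSelfAdjoint R) (hR : E.AdaptedAt R r) (a v : h) (k g : H) :
    ⟪A.tens a (E.eV k), A.amp R (Sig r X (A.tens v (E.eV g)))⟫ =
      ⟪E.eV (E.cut r k), R (E.eV (E.cut r g))⟫ *
        ⟪A.tens a (E.eV (k - E.cut r k)), Sig r X (A.tens v (E.eV (g - E.cut r g)))⟫ := by
  rw [← A.inner_amp_left hRsa, A.amp_tens, hSig.apply_tens_eV hr,
    ← adjoint_inner_left (A.amp (E.past g r)),
    A.adjoint_amp, A.amp_tens, hR.adjoint_past_apply_eV, map_smul, inner_smul_left,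
    inner_conj_symm, ← adjoint_inner_left R, hRsa.adjoint_eq]

theorem commute_amp (hSig : IsAmpCCRFlow E A Sig) (hr : r ≠ ⊤) (X : 𝓚 →L[ℂ] 𝓚)
    {R : 𝓕 →L[ℂ] 𝓕} (hRsa : IsSelfAdjoint R) (hR : E.AdaptedAt R r) :
    Commute (A.amp R) (Sig r X) :=
  A.clm_ext_inner_tens_eV E fun a k v g => by
    have hswap : ⟪A.tens a (E.eV k), Sig r X (A.amp R (A.tens v (E.eV g)))⟫ =
        starRingEnd ℂ ⟪A.tens v (E.eV g), A.amp R (Sig r (adjoint X) (A.tens a (E.eV k)))⟫ := by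
      rw [inner_conj_symm, A.inner_amp_left hRsa, ← hSig.adjoint_apply hr, adjoint_inner_left]
    rw [mul_apply_eq_comp, mul_apply_eq_comp, hSig.inner_tens_eV_amp_apply hr X hRsa hR, hswap,
      hSig.inner_tens_eV_amp_apply hr _ hRsa hR, map_mul, inner_conj_symm, inner_conj_symm,
      ← adjoint_inner_right R, hRsa.adjoint_eq, ← hSig.adjoint_apply hr, adjoint_inner_left]

end IsAmpCCRFlow

/-- `f ↦ f|_{[0,r)} + p f|_{[r,∞)}`, whose second quantisation is `I_{r)} ⊗ P_{[r}`. -/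
def FockSpec.pCut (E : FockSpec H 𝓕) (pH : H →L[ℂ] H) (r : ℝ≥0∞) (f : H) : H :=
  E.cut r f + pH (f - E.cut r f)

namespace FockSpec

variable (E : FockSpec H 𝓕) {pH : H →L[ℂ] H} {r : ℝ≥0∞}

theorem cut_pCut (hpc : ∀ (u : ℝ≥0∞) (f : H), E.cut u (pH f) = pH (E.cut u f)) (f : H) :
    E.cut r (E.pCut pH r f) = E.cut r f := by
  rw [pCut, map_add, cut_idem, hpc, cut_sub_cut, map_zero, add_zero]

theorem pCut_sub_cut (hpc : ∀ (u : ℝ≥0∞) (f : H), E.cut u (pH f) = pH (E.cut u f)) (f : H) :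
    E.pCut pH r f - E.cut r (E.pCut pH r f) = pH (f - E.cut r f) := by
  rw [cut_pCut E hpc, pCut, add_sub_cancel_left]

theorem pCut_pCut (hpi : pH ∘L pH = pH)
    (hpc : ∀ (u : ℝ≥0∞) (f : H), E.cut u (pH f) = pH (E.cut u f)) (f : H) :
    E.pCut pH r (E.pCut pH r f) = E.pCut pH r f := by
  rw [pCut, pCut_sub_cut E hpc, cut_pCut E hpc, ← comp_apply, hpi, pCut]

theorem inner_pCut_left (hpsa : ∀ f g : H, ⟪pH f, g⟫ = ⟪f, pH g⟫)
    (hpc : ∀ (u : ℝ≥0∞) (f : H), E.cut u (pH f) = pH (E.cut u f)) (f g : H) :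
    ⟪E.pCut pH r f, g⟫ = ⟪f, E.pCut pH r g⟫ := by
  rw [pCut, pCut, inner_add_left, inner_add_right, E.cut_sa, hpsa, inner_sub_left, E.cut_sa, hpc,
    map_sub, inner_sub_right]

end FockSpec

namespace PAdapted

variable {E : FockSpec H 𝓕} {A : AmpSpec 𝓕 h 𝓚} {pH : H →L[ℂ] H} {V Vhat : ℝ≥0∞ → 𝓚 →L[ℂ] 𝓚}
  {r : ℝ≥0∞}

theorem apply_tens_eV (hVp : PAdapted E A pH V) (hhat : IsHatOf E A V Vhat)
    (hpc : ∀ (u : ℝ≥0∞) (f : H), E.cut u (pH f) = pH (E.cut u f)) (hr : r ≠ ⊤) (v : h) (g : H) :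
    V r (A.tens v (E.eV g)) = Vhat r (A.tens v (E.eV (E.pCut pH r g))) :=
  A.ext_inner_tens_eV E fun u f => by
    rw [hVp r hr u v f g, hhat r hr u v f _, E.pCut_sub_cut hpc, E.cut_pCut hpc]

/-- `V̂_r^* V_r = I_{r)} ⊗ P_{[r}`. -/
theorem adjoint_comp_apply_tens_eV (hVp : PAdapted E A pH V) (hhat : IsHatOf E A V Vhat)
    (hiso : IsometricHat Vhat) (hpc : ∀ (u : ℝ≥0∞) (f : H), E.cut u (pH f) = pH (E.cut u f))
    (hr : r ≠ ⊤) (v : h) (g : H) :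
    (adjoint (Vhat r) ∘L V r) (A.tens v (E.eV g)) = A.tens v (E.eV (E.pCut pH r g)) := by
  rw [comp_apply, hVp.apply_tens_eV hhat hpc hr, ← comp_apply,
    (ContinuousLinearMap.norm_map_iff_adjoint_comp_self _).1 (hiso r hr), one_apply_eq_self]

theorem eq_comp_adjoint_comp (hVp : PAdapted E A pH V) (hhat : IsHatOf E A V Vhat)
    (hiso : IsometricHat Vhat) (hpc : ∀ (u : ℝ≥0∞) (f : H), E.cut u (pH f) = pH (E.cut u f))
    (hr : r ≠ ⊤) : V r = Vhat r ∘L (adjoint (Vhat r) ∘L V r) :=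
  A.clm_ext_tens_eV E fun v g => by
    rw [comp_apply, hVp.adjoint_comp_apply_tens_eV hhat hiso hpc hr, hVp.apply_tens_eV hhat hpc hr]

theorem isSelfAdjoint_adjoint_comp (hVp : PAdapted E A pH V) (hhat : IsHatOf E A V Vhat)
    (hiso : IsometricHat Vhat) (hpsa : ∀ f g : H, ⟪pH f, g⟫ = ⟪f, pH g⟫)
    (hpc : ∀ (u : ℝ≥0∞) (f : H), E.cut u (pH f) = pH (E.cut u f)) (hr : r ≠ ⊤) :
    IsSelfAdjoint (adjoint (Vhat r) ∘L V r) :=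
  ContinuousLinearMap.isSelfAdjoint_iff'.2 <| A.clm_ext_inner_tens_eV E fun u f v g => by
    rw [adjoint_inner_right, hVp.adjoint_comp_apply_tens_eV hhat hiso hpc hr,
      hVp.adjoint_comp_apply_tens_eV hhat hiso hpc hr, A.inner_tens, A.inner_tens, E.inner_eV,
      E.inner_eV, E.inner_pCut_left hpsa hpc]

theorem isStarProjection_adjoint_comp (hVp : PAdapted E A pH V) (hhat : IsHatOf E A V Vhat)
    (hiso : IsometricHat Vhat) (hpsa : ∀ f g : H, ⟪pH f, g⟫ = ⟪f, pH g⟫) (hpi : pH ∘L pH = pH)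
    (hpc : ∀ (u : ℝ≥0∞) (f : H), E.cut u (pH f) = pH (E.cut u f)) (hr : r ≠ ⊤) :
    IsStarProjection (adjoint (Vhat r) ∘L V r) where
  isIdempotentElem := A.clm_ext_tens_eV E fun v g => by
    rw [mul_apply_eq_comp, hVp.adjoint_comp_apply_tens_eV hhat hiso hpc hr,
      hVp.adjoint_comp_apply_tens_eV hhat hiso hpc hr, E.pCut_pCut hpi hpc]
  isSelfAdjoint := hVp.isSelfAdjoint_adjoint_comp hhat hiso hpsa hpc hr

theorem norm_apply_le (hVp : PAdapted E A pH V) (hhat : IsHatOf E A V Vhat)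
    (hiso : IsometricHat Vhat) (hpsa : ∀ f g : H, ⟪pH f, g⟫ = ⟪f, pH g⟫) (hpi : pH ∘L pH = pH)
    (hpc : ∀ (u : ℝ≥0∞) (f : H), E.cut u (pH f) = pH (E.cut u f)) (hr : r ≠ ⊤) (w : 𝓚) :
    ‖V r w‖ ≤ ‖w‖ := by
  rw [hVp.eq_comp_adjoint_comp hhat hiso hpc hr, comp_apply, hiso r hr]
  exact (hVp.isStarProjection_adjoint_comp hhat hiso hpsa hpi hpc hr).norm_apply_le w

theorem commute_amp_adjoint_comp (hVp : PAdapted E A pH V) (hhat : IsHatOf E A V Vhat)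
    (hiso : IsometricHat Vhat) (hpsa : ∀ f g : H, ⟪pH f, g⟫ = ⟪f, pH g⟫)
    (hpc : ∀ (u : ℝ≥0∞) (f : H), E.cut u (pH f) = pH (E.cut u f)) (hr : r ≠ ⊤)
    {R : 𝓕 →L[ℂ] 𝓕} (hR : E.AdaptedAt R r) :
    Commute (A.amp R) (adjoint (Vhat r) ∘L V r) :=
  A.clm_ext_inner_tens_eV E fun u f v g => by
    rw [mul_apply_eq_comp, hVp.adjoint_comp_apply_tens_eV hhat hiso hpc hr, A.amp_tens,
      mul_apply_eq_comp, A.amp_tens, ← adjoint_inner_left (adjoint (Vhat r) ∘L V r),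
      (hVp.isSelfAdjoint_adjoint_comp hhat hiso hpsa hpc hr).adjoint_eq,
      hVp.adjoint_comp_apply_tens_eV hhat hiso hpc hr, A.inner_tens, A.inner_tens, hR f,
      hR (E.pCut pH r f), E.pCut_sub_cut hpc, E.pCut_sub_cut hpc, E.cut_pCut hpc, E.cut_pCut hpc,
      hpsa]

end PAdapted

namespace IsLeftCocycle

variable {E : FockSpec H 𝓕} {A : AmpSpec 𝓕 h 𝓚} {pH : H →L[ℂ] H}
  {Sig : ℝ≥0∞ → (𝓚 →L[ℂ] 𝓚) → 𝓚 →L[ℂ] 𝓚} {V Vhat : ℝ≥0∞ → 𝓚 →L[ℂ] 𝓚} {s s' : ℝ≥0∞}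

theorem adjoint_comp_of_lt (hcoc : IsLeftCocycle Sig V Vhat) (hVp : PAdapted E A pH V)
    (hhat : IsHatOf E A V Vhat) (hiso : IsometricHat Vhat)
    (hpsa : ∀ f g : H, ⟪pH f, g⟫ = ⟪f, pH g⟫)
    (hpc : ∀ (u : ℝ≥0∞) (f : H), E.cut u (pH f) = pH (E.cut u f)) (hs' : s' ≠ ⊤) (hss' : s < s') :
    adjoint (V s) ∘L V s' = (adjoint (Vhat s) ∘L V s) ∘L Sig s (V (s' - s)) := by
  have hs : s ≠ ⊤ := hss'.ne_top
  have hV : V s' = Vhat s ∘L Sig s (V (s' - s)) := by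
    rw [← hcoc s _ hs (ne_top_of_le_ne_top hs' tsub_le_self), add_tsub_cancel_of_le hss'.le]
  conv_lhs => rw [hVp.eq_comp_adjoint_comp hhat hiso hpc hs, hV, ContinuousLinearMap.adjoint_comp,
    (hVp.isSelfAdjoint_adjoint_comp hhat hiso hpsa hpc hs).adjoint_eq]
  rw [ContinuousLinearMap.comp_assoc, ← ContinuousLinearMap.comp_assoc (adjoint (Vhat s)),
    (ContinuousLinearMap.norm_map_iff_adjoint_comp_self _).1 (hiso s hs)]
  rfl

theorem inner_apply_amp_eq_zero (hcoc : IsLeftCocycle Sig V Vhat) (hVp : PAdapted E A pH V)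
    (hhat : IsHatOf E A V Vhat) (hiso : IsometricHat Vhat) (hSig : IsAmpCCRFlow E A Sig)
    (hpsa : ∀ f g : H, ⟪pH f, g⟫ = ⟪f, pH g⟫)
    (hpc : ∀ (u : ℝ≥0∞) (f : H), E.cut u (pH f) = pH (E.cut u f)) (hs' : s' ≠ ⊤) (hss' : s < s')
    {R R' : 𝓕 →L[ℂ] 𝓕} (hRsa : IsSelfAdjoint R) (hR : E.AdaptedAt R s) (hRR' : R ∘L R' = 0)
    (z w : 𝓚) : ⟪V s (A.amp R z), V s' (A.amp R' w)⟫ = 0 := by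
  have hs : s ≠ ⊤ := hss'.ne_top
  have hcomm : Commute (A.amp R) ((adjoint (Vhat s) ∘L V s) ∘L Sig s (V (s' - s))) :=
    (hVp.commute_amp_adjoint_comp hhat hiso hpsa hpc hs hR).mul_right
      (hSig.commute_amp hs _ hRsa hR)
  rw [← adjoint_inner_right, ← comp_apply (adjoint (V s)), hcoc.adjoint_comp_of_lt hVp hhat hiso
    hpsa hpc hs' hss', A.inner_amp_left hRsa, ← mul_apply_eq_comp (A.amp R), hcomm.eq,
    mul_apply_eq_comp, ← comp_apply (A.amp R), A.amp_comp, hRR', A.amp_zero, zero_apply, map_zero,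
    inner_zero_right]

end IsLeftCocycle

theorem cocycle_riemann_sum_bound_general
    (E : FockSpec H 𝓕) (A : AmpSpec 𝓕 h 𝓚) (S : QST E)
    (pH : H →L[ℂ] H)
    (hpsa : ∀ f g : H, ⟪pH f, g⟫ = ⟪f, pH g⟫) (hpi : pH ∘L pH = pH)
    (hpc : ∀ (u : ℝ≥0∞) (f : H), E.cut u (pH f) = pH (E.cut u f))
    (Sig : ℝ≥0∞ → (𝓚 →L[ℂ] 𝓚) → 𝓚 →L[ℂ] 𝓚) (hSig : IsAmpCCRFlow E A Sig)
    (V Vhat : ℝ≥0∞ → 𝓚 →L[ℂ] 𝓚)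
    (hVp : PAdapted E A pH V) (hhat : IsHatOf E A V Vhat)
    (hiso : IsometricHat Vhat) (hcoc : IsLeftCocycle Sig V Vhat)
    (t : ℝ≥0∞) (htT : t ≠ ⊤) (π : StopPartition t) :
    ∀ z : 𝓚, ‖VSum A S V π z‖ ≤ ‖A.amp (S.meas {s | s ≤ t}) z‖ := by
  intro z
  have hmem : ∀ s ∈ π.pts.erase 0, s ∈ π.pts := fun _ => Finset.mem_of_mem_erase
  have hfin : ∀ s ∈ π.pts.erase 0, s ≠ ⊤ := fun s hs =>
    ne_top_of_le_ne_top htT (π.mem_le s (hmem s hs))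
  simp only [VSum, sum_apply, comp_apply]
  refine norm_sum_apply_le_of_orthogonal _ V (fun s => A.amp (S.meas (Set.Ioc (π.pred s) s))) _
    (fun s hs => hVp.norm_apply_le hhat hiso hpsa hpi hpc (hfin s hs))
    (fun s _ => A.isStarProjection_amp (S.isStarProjection_meas _))
    (fun s hs s' hs' hss' => (A.amp_comp _ _).trans <| by
      rw [S.meas_Ioc_pred_comp_eq_zero π (hmem s hs) (hmem s' hs') hss', A.amp_zero])
    (fun s hs => (A.amp_comp _ _).trans <|
      congrArg A.amp <| S.meas_Ioc_pred_comp_meas_le π (hmem s hs))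
    z fun s hs s' hs' hss' => ?_
  exact hcoc.inner_apply_amp_eq_zero hVp hhat hiso hSig hpsa hpc (hfin s' hs') hss' (S.sa _)
    (S.adaptedAt_meas_Ioc (π.pred_lt hs).le (hfin s hs))
    (S.meas_Ioc_pred_comp_eq_zero π (hmem s hs) (hmem s' hs') hss'.ne) z z

/-- Lemma `uni`: for an isometric `p`-adapted cocycle `V`, a
finite quantum stop time `S` and `t ∈ (0, ∞)`, each Riemann sum
`V_{S,π} = Σ_{j=1}^{n+1} V_{π_j} S((π_{j-1}, π_j])` satisfies
`‖V_{S,π} z‖ ≤ ‖S([0,t]) z‖` for all `z ∈ h ⊗ 𝓕`. -/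
theorem cocycle_riemann_sum_bound
    (E : FockSpec H 𝓕) (A : AmpSpec 𝓕 h 𝓚) (S : QST E) (hS : S.Finite)
    (M : Set (h →L[ℂ] h)) (pH : H →L[ℂ] H)
    (hpsa : ∀ f g : H, ⟪pH f, g⟫ = ⟪f, pH g⟫) (hpi : pH ∘L pH = pH)
    (hpc : ∀ (u : ℝ≥0∞) (f : H), E.cut u (pH f) = pH (E.cut u f))
    (Sig : ℝ≥0∞ → (𝓚 →L[ℂ] 𝓚) → 𝓚 →L[ℂ] 𝓚) (hSig : IsAmpCCRFlow E A Sig)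
    (V Vhat : ℝ≥0∞ → 𝓚 →L[ℂ] 𝓚)
    (hVM : ∀ u : ℝ≥0∞, InVNTensor A M (V u))
    (hVp : PAdapted E A pH V) (hhat : IsHatOf E A V Vhat)
    (hiso : IsometricHat Vhat) (hcoc : IsLeftCocycle Sig V Vhat)
    (t : ℝ≥0∞) (ht0 : 0 < t) (htT : t ≠ ⊤) (π : StopPartition t) :
    ∀ z : 𝓚, ‖VSum A S V π z‖ ≤ ‖A.amp (S.meas {s | s ≤ t}) z‖ :=
  cocycle_riemann_sum_bound_general E A S pH hpsa hpi hpc Sig hSig V Vhat hVp hhat hiso hcoc t htT π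
end
end
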